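/- Let α ∈ ℝ, β > 0, κ > 0. Then the function p ↦ (α + β(log(p/(1−p)) + κp) − (α + βκ/2))² is integrable on (0,1) and ∫₀¹ [α + β(log(p/(1−p)) + κp) − (α + βκ/2)]² dp = β²(κ + κ²/12 + π²/3). -/

import Mathlib

/-!
With `L p = log (p / (1 - p))`, the centred quantile is `β (L p + κ (p - 1/2))`, so the variance
is `β² (∫ L² + 2κ ∫ (p - 1/2) L + κ²/12)`. The middle integral is `1/2`, because
`p (p - 1) L p / 2 + p / 2` is a primitive of `(p - 1/2) L p` that extends continuously to
`[0, 1]`. For the first, `L² = log² p + log² (1 - p) - 2 log p log (1 - p)`; here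
`∫ log² = 2`, and expanding `log (1 - p)` in its power series gives
`∫ log p log (1 - p) = ∑ 1 / ((n + 1) (n + 2)²) = 2 - π²/6`, so `∫ L² = π²/3`.
All integrands that are integrated through a primitive are nonnegative, which makes their
integrability automatic.
-/

open MeasureTheory Set Real Filter Topology

theorem intervalIntegrable_and_integral_eq_sub_of_deriv_nonneg {g g' : ℝ → ℝ} {a b : ℝ}
    (hab : a ≤ b) (hcont : ContinuousOn g (Icc a b))
    (hderiv : ∀ x ∈ Ioo a b, HasDerivAt g (g' x) x) (hpos : ∀ x ∈ Ioo a b, 0 ≤ g' x) :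
    IntervalIntegrable g' volume a b ∧ ∫ x in a..b, g' x = g b - g a := by
  have hint : IntervalIntegrable g' volume a b := by
    rw [intervalIntegrable_iff_integrableOn_Ioc_of_le hab]
    exact intervalIntegral.integrableOn_deriv_of_nonneg hcont hderiv hpos
  exact ⟨hint, intervalIntegral.integral_eq_sub_of_hasDerivAt_of_le hab hcont hderiv hint⟩

theorem hasSum_sub_succ_of_antitone {f : ℕ → ℝ} {l : ℝ} (hf : Antitone f)
    (hl : Tendsto f atTop (𝓝 l)) : HasSum (fun n ↦ f n - f (n + 1)) (f 0 - l) := by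
  rw [hasSum_iff_tendsto_nat_of_nonneg (fun n ↦ sub_nonneg.2 (hf n.le_succ))]
  simp_rw [Finset.sum_range_sub']
  exact tendsto_const_nhds.sub hl

theorem hasSum_one_div_succ_mul_add_two_sq :
    HasSum (fun n : ℕ ↦ 1 / (((n : ℝ) + 1) * ((n : ℝ) + 2) ^ 2)) (2 - π ^ 2 / 6) := by
  have htel : HasSum (fun n : ℕ ↦ 1 / ((n : ℝ) + 1) - 1 / ((n : ℝ) + 2)) 1 := by
    have := hasSum_sub_succ_of_antitone (f := fun n : ℕ ↦ 1 / ((n : ℝ) + 1))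
      (fun m n hmn ↦ by dsimp only; gcongr) tendsto_one_div_add_atTop_nhds_zero_nat
    convert this using 2 with n
    · push_cast; ring
    · simp
  have hzeta : HasSum (fun n : ℕ ↦ 1 / ((n : ℝ) + 2) ^ 2) (π ^ 2 / 6 - 1) := by
    simpa [Finset.sum_range_succ] using (hasSum_nat_add_iff' 2).2 hasSum_zeta_two
  have hsplit : ∀ n : ℕ, 1 / (((n : ℝ) + 1) * ((n : ℝ) + 2) ^ 2) =
      (1 / ((n : ℝ) + 1) - 1 / ((n : ℝ) + 2)) - 1 / ((n : ℝ) + 2) ^ 2 := fun n ↦ by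
    field_simp
    ring
  simp_rw [hsplit]
  rw [show (2 : ℝ) - π ^ 2 / 6 = 1 - (π ^ 2 / 6 - 1) by ring]
  exact htel.sub hzeta

theorem intervalIntegrable_and_integral_pow_mul_neg_log (n : ℕ) :
    IntervalIntegrable (fun x ↦ x ^ n * -log x) volume 0 1 ∧
      ∫ x in (0 : ℝ)..1, x ^ n * -log x = 1 / ((n : ℝ) + 1) ^ 2 := by
  set g : ℝ → ℝ := fun x ↦
    x ^ (n + 1) / ((n : ℝ) + 1) ^ 2 - x ^ n * (x * log x) / ((n : ℝ) + 1)
  have hcont : ContinuousOn g (Icc 0 1) := by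
    have := continuous_mul_log
    fun_prop
  have hderiv : ∀ x ∈ Ioo (0 : ℝ) 1, HasDerivAt g (x ^ n * -log x) x := by
    intro x hx
    have h := ((hasDerivAt_pow (n + 1) x).div_const (((n : ℝ) + 1) ^ 2)).sub
      (((hasDerivAt_pow n x).mul (hasDerivAt_mul_log hx.1.ne')).div_const ((n : ℝ) + 1))
    refine h.congr_deriv ?_
    rcases n with _ | n
    · simp
    · push_cast
      field_simp
      ring
  have hpos : ∀ x ∈ Ioo (0 : ℝ) 1, 0 ≤ x ^ n * -log x := fun x hx ↦
    mul_nonneg (pow_nonneg hx.1.le n) (neg_nonneg.2 (log_nonpos hx.1.le hx.2.le))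
  obtain ⟨hint, heq⟩ :=
    intervalIntegrable_and_integral_eq_sub_of_deriv_nonneg zero_le_one hcont hderiv hpos
  refine ⟨hint, heq.trans ?_⟩
  simp [g]

theorem intervalIntegrable_and_integral_log_sq :
    IntervalIntegrable (fun x ↦ log x ^ 2) volume 0 1 ∧
      ∫ x in (0 : ℝ)..1, log x ^ 2 = 2 := by
  set g : ℝ → ℝ := fun x ↦ x * log x ^ 2 - 2 * (x * log x) + 2 * x
  have hcont : ContinuousOn g (Icc 0 1) := by
    -- `x (log x)² = (2 √x log √x)²` on `[0, 1]`, and `t log t` is continuous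
    have hsq : ContinuousOn (fun x : ℝ ↦ x * log x ^ 2) (Icc 0 1) := by
      refine ((continuous_mul_log.comp continuous_sqrt).const_mul 2).pow 2 |>.continuousOn.congr ?_
      intro x hx
      simp only [Pi.pow_apply, Function.comp_apply]
      rw [log_sqrt hx.1, mul_pow, mul_pow, sq_sqrt hx.1]
      ring
    exact (hsq.sub (continuous_mul_log.const_mul 2).continuousOn).add (by fun_prop)
  have hderiv : ∀ x ∈ Ioo (0 : ℝ) 1, HasDerivAt g (log x ^ 2) x := by
    intro x hx
    have hx0 : x ≠ 0 := hx.1.ne'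
    have h := (((hasDerivAt_id x).mul ((hasDerivAt_log hx0).pow 2)).sub
      ((hasDerivAt_mul_log hx0).const_mul 2)).add ((hasDerivAt_id x).const_mul 2)
    refine h.congr_deriv ?_
    simp only [Pi.pow_apply, id]
    field_simp
    ring
  obtain ⟨hint, heq⟩ := intervalIntegrable_and_integral_eq_sub_of_deriv_nonneg zero_le_one hcont
    hderiv fun x _ ↦ sq_nonneg (log x)
  refine ⟨hint, heq.trans ?_⟩
  simp [g]

theorem log_div_one_sub (x : ℝ) : log (x / (1 - x)) = log x - log (1 - x) := by
  -- at `x = 0` and `x = 1` both sides vanish, since `log 0 = 0` and `1 / 0 = 0`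
  rcases eq_or_ne x 0 with rfl | hx0
  · simp
  rcases eq_or_ne x 1 with rfl | hx1
  · simp
  exact log_div hx0 (sub_ne_zero.2 hx1.symm)

theorem intervalIntegrable_and_integral_sub_half_mul_log_div_one_sub :
    IntervalIntegrable (fun x ↦ (x - 1 / 2) * log (x / (1 - x))) volume 0 1 ∧
      ∫ x in (0 : ℝ)..1, (x - 1 / 2) * log (x / (1 - x)) = 1 / 2 := by
  set g : ℝ → ℝ := fun x ↦ ((x - 1) * (x * log x) + x * ((1 - x) * log (1 - x))) / 2 + x / 2
  have hcont : ContinuousOn g (Icc 0 1) := by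
    have := continuous_mul_log
    have := continuous_mul_log.comp (continuous_sub_left (1 : ℝ))
    fun_prop
  have hderiv : ∀ x ∈ Ioo (0 : ℝ) 1, HasDerivAt g ((x - 1 / 2) * log (x / (1 - x))) x := by
    intro x hx
    have hx1 : 1 - x ≠ 0 := sub_ne_zero.2 hx.2.ne'
    have hrefl := (hasDerivAt_mul_log hx1).comp x ((hasDerivAt_id x).const_sub 1)
    have h := ((((hasDerivAt_id x).sub_const 1).mul (hasDerivAt_mul_log hx.1.ne')).add
      ((hasDerivAt_id x).mul hrefl)).div_const 2 |>.add ((hasDerivAt_id x).div_const 2)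
    refine h.congr_deriv ?_
    rw [log_div_one_sub]
    simp only [id, Function.comp_apply]
    ring
  have hpos : ∀ x ∈ Ioo (0 : ℝ) 1, 0 ≤ (x - 1 / 2) * log (x / (1 - x)) := by
    intro x hx
    have hx1 : 0 < 1 - x := sub_pos.2 hx.2
    rcases le_total x (1 / 2) with h | h
    · refine mul_nonneg_of_nonpos_of_nonpos (by linarith)
        (log_nonpos (div_nonneg hx.1.le hx1.le) ?_)
      rw [div_le_one hx1]; linarith
    · refine mul_nonneg (by linarith) (log_nonneg ?_)
      rw [one_le_div hx1]; linarith
  obtain ⟨hint, heq⟩ :=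
    intervalIntegrable_and_integral_eq_sub_of_deriv_nonneg zero_le_one hcont hderiv hpos
  refine ⟨hint, heq.trans ?_⟩
  simp [g]

theorem integral_log_mul_log_one_sub :
    ∫ x in (0 : ℝ)..1, log x * log (1 - x) = 2 - π ^ 2 / 6 := by
  -- expand `-log (1 - x) = ∑ xⁿ⁺¹ / (n + 1)` and integrate termwise
  set F : ℕ → ℝ → ℝ := fun n x ↦ x ^ (n + 1) * -log x / (n + 1)
  have hF_nonneg : ∀ n, ∀ x ∈ Ioo (0 : ℝ) 1, 0 ≤ F n x := fun n x hx ↦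
    div_nonneg (mul_nonneg (pow_nonneg hx.1.le _) (neg_nonneg.2 (log_nonpos hx.1.le hx.2.le)))
      (by positivity)
  have hF_int : ∀ n, IntegrableOn (F n) (Ioo 0 1) := fun n ↦
    (intervalIntegrable_iff_integrableOn_Ioo_of_le zero_le_one).1
      ((intervalIntegrable_and_integral_pow_mul_neg_log (n + 1)).1.div_const _)
  have hF_val :
      ∀ n, ∫ x in Ioo 0 1, F n x = 1 / (((n : ℝ) + 1) * ((n : ℝ) + 2) ^ 2) := fun n ↦ by
    rw [MeasureTheory.integral_div, ← integral_Ioc_eq_integral_Ioo,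
      ← intervalIntegral.integral_of_le zero_le_one,
      (intervalIntegrable_and_integral_pow_mul_neg_log (n + 1)).2]
    push_cast
    field_simp
    ring
  have hF_norm : ∀ n, ∫ x in Ioo 0 1, ‖F n x‖ = ∫ x in Ioo 0 1, F n x := fun n ↦
    setIntegral_congr_fun measurableSet_Ioo fun x hx ↦ norm_of_nonneg (hF_nonneg n x hx)
  have hF_tsum : ∫ x in Ioo 0 1, ∑' n, F n x = ∫ x in Ioo 0 1, log x * log (1 - x) := by
    refine setIntegral_congr_fun measurableSet_Ioo fun x hx ↦ ?_
    have habs : |x| < 1 := by rw [abs_of_pos hx.1]; exact hx.2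
    have h := (hasSum_pow_div_log_of_abs_lt_one habs).mul_right (-log x)
    simp_rw [div_mul_eq_mul_div] at h
    rw [h.tsum_eq]
    ring
  have hsum := hasSum_integral_of_summable_integral_norm hF_int
    (by simp_rw [hF_norm, hF_val]; exact hasSum_one_div_succ_mul_add_two_sq.summable)
  simp_rw [hF_val] at hsum
  rw [intervalIntegral.integral_of_le zero_le_one, integral_Ioc_eq_integral_Ioo, ← hF_tsum]
  exact hasSum_one_div_succ_mul_add_two_sq.unique hsum |>.symm

theorem intervalIntegrable_and_integral_log_div_one_sub_sq :
    IntervalIntegrable (fun x ↦ log (x / (1 - x)) ^ 2) volume 0 1 ∧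
      ∫ x in (0 : ℝ)..1, log (x / (1 - x)) ^ 2 = π ^ 2 / 3 := by
  obtain ⟨hsq, hsq_val⟩ := intervalIntegrable_and_integral_log_sq
  have hsq' : IntervalIntegrable (fun x ↦ log (1 - x) ^ 2) volume 0 1 := by
    simpa using (hsq.comp_sub_left 1).symm
  have hsq'_val : ∫ x in (0 : ℝ)..1, log (1 - x) ^ 2 = 2 := by
    have :=
      intervalIntegral.integral_comp_sub_left (fun x ↦ log x ^ 2) (1 : ℝ) (a := 0) (b := 1)
    simp only [sub_zero, sub_self] at this
    rw [this, hsq_val]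
  have hmul : IntervalIntegrable (fun x ↦ log x * log (1 - x)) volume 0 1 := by
    refine (hsq.add hsq').mono_fun (by fun_prop) (Eventually.of_forall fun x ↦ ?_)
    simp only [norm_mul, Real.norm_eq_abs]
    refine (le_abs_self _).trans' ?_
    nlinarith [two_mul_le_add_sq |log x| |log (1 - x)|, sq_abs (log x), sq_abs (log (1 - x)),
      abs_nonneg (log x), abs_nonneg (log (1 - x))]
  have hsplit : (fun x ↦ log (x / (1 - x)) ^ 2) =
      fun x ↦ log x ^ 2 + log (1 - x) ^ 2 - 2 * (log x * log (1 - x)) := by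
    ext x
    rw [log_div_one_sub]
    ring
  rw [hsplit]
  refine ⟨(hsq.add hsq').sub (hmul.const_mul 2), ?_⟩
  rw [intervalIntegral.integral_sub (hsq.add hsq') (hmul.const_mul 2),
    intervalIntegral.integral_add hsq hsq', intervalIntegral.integral_const_mul, hsq_val, hsq'_val,
    integral_log_mul_log_one_sub]
  ring

theorem integral_sub_half_sq : ∫ x in (0 : ℝ)..1, (x - 1 / 2) ^ 2 = 1 / 12 := by
  rw [intervalIntegral.integral_comp_sub_right (fun x ↦ x ^ 2), integral_pow]
  norm_num

theorem fld_variance_general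
    (α β κ : ℝ) :
    IntegrableOn
      (fun p : ℝ => (α + β * (Real.log (p / (1 - p)) + κ * p) - (α + β * κ / 2)) ^ 2)
      (Set.Ioo 0 1) ∧
    ∫ p in Set.Ioo (0 : ℝ) 1,
        (α + β * (Real.log (p / (1 - p)) + κ * p) - (α + β * κ / 2)) ^ 2 =
      β ^ 2 * (κ + κ ^ 2 / 12 + Real.pi ^ 2 / 3) := by
  obtain ⟨hsq, hsq_val⟩ := intervalIntegrable_and_integral_log_div_one_sub_sq
  obtain ⟨hmix, hmix_val⟩ := intervalIntegrable_and_integral_sub_half_mul_log_div_one_sub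
  have hpoly : IntervalIntegrable (fun x : ℝ ↦ (x - 1 / 2) ^ 2) volume 0 1 :=
    (by fun_prop : Continuous fun x : ℝ ↦ (x - 1 / 2) ^ 2).intervalIntegrable 0 1
  have hexpand :
      (fun p : ℝ ↦ (α + β * (log (p / (1 - p)) + κ * p) - (α + β * κ / 2)) ^ 2) =
      fun p ↦ β ^ 2 * (log (p / (1 - p)) ^ 2 + 2 * κ * ((p - 1 / 2) * log (p / (1 - p))) +
        κ ^ 2 * (p - 1 / 2) ^ 2) := by
    ext p
    ring
  have hint := (hsq.add (hmix.const_mul (2 * κ))).add (hpoly.const_mul (κ ^ 2))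
  rw [hexpand]
  refine ⟨(intervalIntegrable_iff_integrableOn_Ioo_of_le zero_le_one).1 (hint.const_mul _), ?_⟩
  rw [← integral_Ioc_eq_integral_Ioo, ← intervalIntegral.integral_of_le zero_le_one,
    intervalIntegral.integral_const_mul,
    intervalIntegral.integral_add (hsq.add (hmix.const_mul _)) (hpoly.const_mul _),
    intervalIntegral.integral_add hsq (hmix.const_mul _), intervalIntegral.integral_const_mul,
    intervalIntegral.integral_const_mul, hsq_val, hmix_val, integral_sub_half_sq]
  ring

/-- The variance of the flattened logistic distribution `FLD(α,β,κ)`: the squared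
deviation of the quantile function from the mean `α + βκ/2` is integrable on `(0,1)` with
integral `β²(κ + κ²/12 + π²/3)` (Section 4.1 of the paper). -/
theorem fld_variance
    (α β κ : ℝ) (hβ : 0 < β) (hκ : 0 < κ) :
    IntegrableOn
      (fun p : ℝ => (α + β * (Real.log (p / (1 - p)) + κ * p) - (α + β * κ / 2)) ^ 2)
      (Set.Ioo 0 1) ∧
    ∫ p in Set.Ioo (0 : ℝ) 1,
        (α + β * (Real.log (p / (1 - p)) + κ * p) - (α + β * κ / 2)) ^ 2 =
      β ^ 2 * (κ + κ ^ 2 / 12 + Real.pi ^ 2 / 3) :=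
  fld_variance_general α β κ
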